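/- arXiv:2111.02083 — 3 statements merged into one kernel-verified Lean document; each statement's English description precedes it below -/
import Mathlib

section
/- Let p ∈ ℕ* and let x ∈ ℝ^{q}. Define the random vector Q(x) componentwise by Q(x)_j = ‖x‖_p · sign(x_j) · U_j where U_j are independent Bernoulli random variables with success probability |x_j|/‖x‖_p. Then E[Q(x)] = x and E[‖Q(x) − x‖²] = ‖x‖₁ ‖x‖_p − ‖x‖². -/
/-!
Each coordinate `Q_j = ‖x‖_p · sign x_j · U_j` is a scaled Bernoulli variable with
`‖x‖_p · 𝔼 U_j = |x_j|`. Since `U_j ^ 2 = U_j`, the squared error of a coordinate is affine in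
`U_j`, so both its mean and its second moment are read off from `𝔼 U_j`; summing the
coordinates gives the variance.
-/

open MeasureTheory

namespace Real

theorem sign_mul_abs (y : ℝ) : sign y * |y| = y := by
  rcases lt_trichotomy y 0 with hy | rfl | hy
  · rw [sign_of_neg hy, abs_of_neg hy]; ring
  · simp
  · rw [sign_of_pos hy, abs_of_pos hy]; ring

theorem sign_sq_mul_abs (y : ℝ) : sign y ^ 2 * |y| = |y| := by
  rcases eq_or_ne y 0 with rfl | hy
  · simp
  · rcases sign_apply_eq_of_ne_zero y hy with h | h <;> rw [h] <;> ring

end Real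

theorem rpow_sum_abs_rpow_pos {ι : Type*} [Fintype ι] {x : ι → ℝ} {j : ι} (hj : x j ≠ 0)
    (r s : ℝ) : 0 < (∑ i, |x i| ^ r) ^ s :=
  Real.rpow_pos_of_pos (Finset.sum_pos' (fun _ _ => Real.rpow_nonneg (abs_nonneg _) _)
    ⟨j, Finset.mem_univ _, Real.rpow_pos_of_pos (abs_pos.mpr hj) _⟩) _

theorem EuclideanSpace.integral_norm_sq_sub {ι Ω : Type*} [Fintype ι] [MeasurableSpace Ω]
    {μ : Measure Ω} (Q : Ω → EuclideanSpace ℝ ι) (x : EuclideanSpace ℝ ι)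
    (hQ : ∀ j, Integrable (fun a => (Q a j - x j) ^ 2) μ) :
    ∫ a, ‖Q a - x‖ ^ 2 ∂μ = ∑ j, ∫ a, (Q a j - x j) ^ 2 ∂μ := by
  simp only [EuclideanSpace.real_norm_sq_eq, PiLp.sub_apply]
  exact integral_finsetSum _ fun j _ => hQ j

theorem sq_const_mul_sign_mul_sub {u : ℝ} (hu : u = 0 ∨ u = 1) (c y : ℝ) :
    (c * Real.sign y * u - y) ^ 2 =
      (c * Real.sign y ^ 2 - 2 * Real.sign y * y) * (c * u) + y ^ 2 := by
  rcases hu with rfl | rfl <;> ring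

section SignedBernoulli

variable {Ω : Type*} [MeasurableSpace Ω] {μ : Measure Ω} {u : Ω → ℝ} {c y : ℝ}

theorem integral_const_mul_sign_mul (hmean : c * ∫ a, u a ∂μ = |y|) :
    ∫ a, c * Real.sign y * u a ∂μ = y := by
  rw [integral_const_mul, mul_comm c, mul_assoc, hmean, Real.sign_mul_abs]

variable [IsProbabilityMeasure μ]

theorem integrable_sq_const_mul_sign_mul_sub (hint : Integrable u μ)
    (hu : ∀ a, u a = 0 ∨ u a = 1) :
    Integrable (fun a => (c * Real.sign y * u a - y) ^ 2) μ := by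
  simp only [sq_const_mul_sign_mul_sub (hu _)]
  exact ((hint.const_mul c).const_mul _).add (integrable_const _)

theorem integral_sq_const_mul_sign_mul_sub (hint : Integrable u μ)
    (hu : ∀ a, u a = 0 ∨ u a = 1) (hmean : c * ∫ a, u a ∂μ = |y|) :
    ∫ a, (c * Real.sign y * u a - y) ^ 2 ∂μ = c * |y| - y ^ 2 := by
  simp only [sq_const_mul_sign_mul_sub (hu _)]
  rw [integral_add ((hint.const_mul c).const_mul _) (integrable_const _), integral_const_mul,
    integral_const_mul, hmean, integral_const, probReal_univ, one_smul]
  have hsign := Real.sign_mul_abs y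
  have habs := Real.sign_sq_mul_abs y
  linear_combination c * habs - 2 * y * hsign

end SignedBernoulli

theorem quantization_mean_and_variance_general (q p : ℕ)
    (Ω : Type*) [MeasurableSpace Ω] (μ : Measure Ω) [IsProbabilityMeasure μ]
    (x : EuclideanSpace ℝ (Fin q))
    (np : ℝ) (hnp : np = (∑ j, |x j| ^ (p : ℝ)) ^ ((p : ℝ)⁻¹))
    (U : Fin q → Ω → ℝ)
    (hUint : ∀ j, Integrable (U j) μ)
    (hU01 : ∀ j a, U j a = 0 ∨ U j a = 1)
    (hUmean : ∀ j, ∫ a, U j a ∂μ = |x j| / np)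
    (Q : Ω → EuclideanSpace ℝ (Fin q))
    (hQ : ∀ a j, Q a j = np * Real.sign (x j) * U j a) :
    (∀ j, ∫ a, Q a j ∂μ = x j) ∧
    (∫ a, ‖Q a - x‖ ^ 2 ∂μ = (∑ j, |x j|) * np - ‖x‖ ^ 2) := by
  have hscale : ∀ j, np * ∫ a, U j a ∂μ = |x j| := fun j => by
    rcases eq_or_ne (x j) 0 with hj | hj
    · simp [hUmean, hj]
    · rw [hUmean, mul_div_cancel₀ _ (hnp ▸ rpow_sum_abs_rpow_pos hj _ _).ne']
  simp only [hQ]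
  refine ⟨fun j => integral_const_mul_sign_mul (hscale j), ?_⟩
  rw [EuclideanSpace.integral_norm_sq_sub _ _ fun j => by
      simpa only [hQ] using integrable_sq_const_mul_sign_mul_sub (hUint j) (hU01 j)]
  simp only [hQ]
  rw [Finset.sum_congr rfl fun j _ =>
      integral_sq_const_mul_sign_mul_sub (hUint j) (hU01 j) (hscale j),
    Finset.sum_sub_distrib, ← Finset.mul_sum, EuclideanSpace.real_norm_sq_eq, mul_comm]

theorem quantization_mean_and_variance (q p : ℕ) (hp : 0 < p)
    (Ω : Type*) [MeasurableSpace Ω] (μ : Measure Ω) [IsProbabilityMeasure μ]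
    (x : EuclideanSpace ℝ (Fin q)) (hx : x ≠ 0)
    (np : ℝ) (hnp : np = (∑ j, |x j| ^ (p : ℝ)) ^ ((p : ℝ)⁻¹))
    (U : Fin q → Ω → ℝ)
    (hUint : ∀ j, Integrable (U j) μ)
    (hU01 : ∀ j a, U j a = 0 ∨ U j a = 1)
    (hUmean : ∀ j, ∫ a, U j a ∂μ = |x j| / np)
    (Q : Ω → EuclideanSpace ℝ (Fin q))
    (hQ : ∀ a j, Q a j = np * Real.sign (x j) * U j a) :
    (∀ j, ∫ a, Q a j ∂μ = x j) ∧
    (∫ a, ‖Q a - x‖ ^ 2 ∂μ = (∑ j, |x j|) * np - ‖x‖ ^ 2) :=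
  quantization_mean_and_variance_general q p Ω μ x np hnp U hUint hU01 hUmean Q hQ
end

section
/- Let Q satisfy E[Q(s) | s] = s and E[‖Q(s)‖² | s] ≤ (1+ω)‖s‖², and let B be a Bernoulli(p) random variable independent of Q and of s (a square-integrable random vector). Then E[‖(B/p) Q(s) − s‖²] ≤ ω_p E[‖s‖²], where ω_p := ((1−p)/p)(1+ω) + ω. -/
open MeasureTheory ProbabilityTheory

section Aux

local notation "⟪" x ", " y "⟫" => @inner ℝ _ _ x y

lemma aux_integrable_inner {Ω : Type*} {mΩ : MeasurableSpace Ω} {μ : Measure Ω}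
    {E : Type*} [NormedAddCommGroup E] [InnerProductSpace ℝ E]
    {f g : Ω → E} (hf : MemLp f 2 μ) (hg : MemLp g 2 μ) :
    Integrable (fun a => ⟪f a, g a⟫) μ := by
  have h := MeasureTheory.L2.integrable_inner (𝕜 := ℝ) (hf.toLp f) (hg.toLp g)
  refine h.congr ?_
  filter_upwards [hf.coeFn_toLp, hg.coeFn_toLp] with a h1 h2
  rw [h1, h2]

lemma aux_condexp_clm {Ω : Type*} {m m0 : MeasurableSpace Ω} {μ : Measure Ω}
    (hm : m ≤ m0) [SigmaFinite (μ.trim hm)]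
    {E F : Type*} [NormedAddCommGroup E] [NormedSpace ℝ E] [CompleteSpace E]
    [NormedAddCommGroup F] [NormedSpace ℝ F] [CompleteSpace F]
    (T : E →L[ℝ] F) {f : Ω → E} (hf : Integrable f μ) :
    μ[fun a => T (f a)|m] =ᵐ[μ] fun a => T ((μ[f|m]) a) := by
  refine (ae_eq_condExp_of_forall_setIntegral_eq hm (T.integrable_comp hf) ?_ ?_ ?_).symm
  · exact fun s _ _ => (T.integrable_comp integrable_condExp).integrableOn
  · intro s hs _
    rw [T.integral_comp_comm integrable_condExp.integrableOn,
        setIntegral_condExp hm hf hs, T.integral_comp_comm hf.integrableOn]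
  · have h : AEStronglyMeasurable[m] (μ[f|m]) μ := stronglyMeasurable_condExp.aestronglyMeasurable
    exact T.continuous.comp_aestronglyMeasurable h

lemma aux_coord_memLp {Ω : Type*} {mΩ : MeasurableSpace Ω} {μ : Measure Ω} {n : ℕ}
    {f : Ω → EuclideanSpace ℝ (Fin n)} (hf : MemLp f 2 μ) (i : Fin n) :
    MemLp (fun a => f a i) 2 μ := by
  have h := (EuclideanSpace.proj (𝕜 := ℝ) (ι := Fin n) i).comp_memLp' hf
  exact h

end Aux

set_option maxHeartbeats 1000000 in
theorem compressed_partial_participation_variance (q : ℕ) (Ω : Type*)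
    (mS : MeasurableSpace Ω) [m0 : MeasurableSpace Ω] (μ : Measure Ω) [IsProbabilityMeasure μ]
    (p ω : ℝ) (hp0 : 0 < p) (hp1 : p ≤ 1) (hω : 0 ≤ ω)
    (B : Ω → ℝ) (QS S : Ω → EuclideanSpace ℝ (Fin q))
    (hmS : mS = MeasurableSpace.comap S inferInstance)
    (hmSle : mS ≤ m0)
    (hBmeas : Measurable B) (hB01 : ∀ a, B a = 0 ∨ B a = 1)
    (hBmean : ∫ a, B a ∂μ = p)
    (hQS : MemLp QS 2 μ) (hS : MemLp S 2 μ)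
    (hindep : IndepFun B (fun a => (QS a, S a)) μ)
    (hmean : μ[QS | mS] =ᵐ[μ] S)
    (hmoment : ∀ᵐ a ∂μ, (μ[fun b => ‖QS b‖ ^ 2 | mS]) a ≤ (1 + ω) * ‖S a‖ ^ 2) :
    ∫ a, ‖(B a / p) • QS a - S a‖ ^ 2 ∂μ
      ≤ ((1 - p) / p * (1 + ω) + ω) * ∫ a, ‖S a‖ ^ 2 ∂μ := by
  have hp : (0:ℝ) < p := hp0
  have hpne : p ≠ 0 := ne_of_gt hp
  -- basic integrability
  have hQSnorm2 : Integrable (fun a => ‖QS a‖ ^ 2) μ :=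
    (memLp_two_iff_integrable_sq_norm hQS.1).mp hQS
  have hSnorm2 : Integrable (fun a => ‖S a‖ ^ 2) μ :=
    (memLp_two_iff_integrable_sq_norm hS.1).mp hS
  have hQSS : Integrable (fun a => (inner ℝ (QS a) (S a) : ℝ)) μ := aux_integrable_inner hQS hS
  -- pointwise expansion
  have hpt : ∀ a, ‖(B a / p) • QS a - S a‖ ^ 2
      = (B a / p) ^ 2 * ‖QS a‖ ^ 2 - 2 * ((B a / p) * (inner ℝ (QS a) (S a) : ℝ)) + ‖S a‖ ^ 2 := by
    intro a
    rw [norm_sub_sq_real, norm_smul, real_inner_smul_left, mul_pow]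
    simp only [Real.norm_eq_abs, sq_abs]
    try ring
  -- integrability of pieces
  have hBabs : ∀ a, |B a / p| ≤ 1 / p := by
    intro a
    have h1p : (0:ℝ) ≤ 1 / p := by positivity
    rcases hB01 a with h | h <;> rw [h]
    · simpa using h1p
    · rw [abs_of_nonneg h1p]
  have hBmeas0 : Measurable[m0] B := hBmeas
  have hBdiv := hBmeas0.div_const p
  have hBdiv2 := hBdiv.pow_const 2
  have hBae : AEStronglyMeasurable[m0] (fun a => B a / p) μ :=
    Measurable.aestronglyMeasurable (μ := μ) hBdiv
  have hB2ae : AEStronglyMeasurable[m0] (fun a => (B a / p) ^ 2) μ :=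
    Measurable.aestronglyMeasurable (μ := μ) hBdiv2
  have hX1 : Integrable (fun a => (B a / p) ^ 2 * ‖QS a‖ ^ 2) μ := by
    refine hQSnorm2.bdd_mul (c := (1 / p) ^ 2) hB2ae (Filter.Eventually.of_forall fun a => ?_)
    rw [Real.norm_eq_abs, abs_pow]
    exact pow_le_pow_left₀ (abs_nonneg _) (hBabs a) 2
  have hX2 : Integrable (fun a => (B a / p) * (inner ℝ (QS a) (S a) : ℝ)) μ :=
    hQSS.bdd_mul (c := 1 / p) hBae (Filter.Eventually.of_forall fun a => hBabs a)
  -- expand the integral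
  have hexp : ∫ a, ‖(B a / p) • QS a - S a‖ ^ 2 ∂μ
      = ∫ a, (B a / p) ^ 2 * ‖QS a‖ ^ 2 ∂μ
        - 2 * ∫ a, (B a / p) * (inner ℝ (QS a) (S a) : ℝ) ∂μ
        + ∫ a, ‖S a‖ ^ 2 ∂μ := by
    have hX2' : Integrable (fun a => 2 * ((B a / p) * (inner ℝ (QS a) (S a) : ℝ))) μ :=
      hX2.const_mul 2
    have hX12 : Integrable
        (fun a => (B a / p) ^ 2 * ‖QS a‖ ^ 2
          - 2 * ((B a / p) * (inner ℝ (QS a) (S a) : ℝ))) μ := hX1.sub hX2'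
    simp_rw [hpt]
    rw [integral_add hX12 hSnorm2, integral_sub hX1 hX2', integral_const_mul]
  -- independence computations
  have hind1 : IndepFun (fun a => (B a / p) ^ 2) (fun a => ‖QS a‖ ^ 2) μ := by
    exact hindep.comp ((measurable_id.div_const p).pow_const 2)
      ((measurable_fst.norm).pow_const 2)
  have hind2 : IndepFun (fun a => B a / p) (fun a => (inner ℝ (QS a) (S a) : ℝ)) μ := by
    exact hindep.comp (measurable_id.div_const p)
      ((continuous_inner (𝕜 := ℝ) (E := EuclideanSpace ℝ (Fin q))).measurable.comp
        (measurable_fst.prodMk measurable_snd))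
  have hB2int : ∫ a, (B a / p) ^ 2 ∂μ = 1 / p := by
    have h : (fun a => (B a / p) ^ 2) = fun a => B a * (1 / p ^ 2) := by
      funext a
      rcases hB01 a with h | h <;> rw [h] <;> field_simp <;> norm_num
    rw [h, integral_mul_const, hBmean]
    field_simp
  have hBdivint : ∫ a, B a / p ∂μ = 1 := by
    rw [integral_div, hBmean, div_self hpne]
  have hI1 : ∫ a, (B a / p) ^ 2 * ‖QS a‖ ^ 2 ∂μ = (1 / p) * ∫ a, ‖QS a‖ ^ 2 ∂μ := by
    have h := IndepFun.integral_mul_eq_mul_integral hind1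
      hB2ae (hQS.1.norm.pow 2)
    have heq : (fun a => (B a / p) ^ 2 * ‖QS a‖ ^ 2)
        = ((fun a => (B a / p) ^ 2) * fun a => ‖QS a‖ ^ 2) := rfl
    rw [heq, h, hB2int]
  have hI2 : ∫ a, (B a / p) * (inner ℝ (QS a) (S a) : ℝ) ∂μ
      = ∫ a, (inner ℝ (QS a) (S a) : ℝ) ∂μ := by
    have h := IndepFun.integral_mul_eq_mul_integral hind2 hBae hQSS.aestronglyMeasurable
    have heq : (fun a => (B a / p) * (inner ℝ (QS a) (S a) : ℝ))
        = ((fun a => B a / p) * fun a => (inner ℝ (QS a) (S a) : ℝ)) := rfl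
    rw [heq, h, hBdivint, one_mul]
  -- conditional expectation: second moment bound
  haveI : SigmaFinite (μ.trim hmSle) := by
    have : IsFiniteMeasure (μ.trim hmSle) := isFiniteMeasure_trim hmSle
    infer_instance
  have hQQ : ∫ a, ‖QS a‖ ^ 2 ∂μ ≤ (1 + ω) * ∫ a, ‖S a‖ ^ 2 ∂μ := by
    have h1 : ∫ a, (μ[fun b => ‖QS b‖ ^ 2|mS]) a ∂μ = ∫ a, ‖QS a‖ ^ 2 ∂μ :=
      integral_condExp hmSle
    have h2 : ∫ a, (μ[fun b => ‖QS b‖ ^ 2|mS]) a ∂μ ≤ ∫ a, (1 + ω) * ‖S a‖ ^ 2 ∂μ :=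
      integral_mono_ae integrable_condExp (hSnorm2.const_mul _) hmoment
    rw [integral_const_mul] at h2
    linarith
  -- conditional expectation: cross term
  have hSmeas' : Measurable[mS] S := by
    rw [hmS]; exact Measurable.of_comap_le le_rfl
  have hQSint : Integrable QS μ := hQS.integrable one_le_two
  have hcross : ∫ a, (inner ℝ (QS a) (S a) : ℝ) ∂μ = ∫ a, ‖S a‖ ^ 2 ∂μ := by
    have key : ∀ i : Fin q, ∫ a, S a i * QS a i ∂μ = ∫ a, S a i * S a i ∂μ := by
      intro i
      have hSi : MemLp (fun a => S a i) 2 μ := aux_coord_memLp hS i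
      have hQi : MemLp (fun a => QS a i) 2 μ := aux_coord_memLp hQS i
      have hint : Integrable (fun a => S a i * QS a i) μ := by
        have := aux_integrable_inner (E := ℝ) hSi hQi
        simpa [RCLike.inner_apply, conj_trivial, mul_comm] using this
      have hSim : StronglyMeasurable[mS] (fun a => S a i) :=
        (((EuclideanSpace.proj (𝕜 := ℝ) i).continuous.measurable).comp hSmeas').stronglyMeasurable
      have hQiint : Integrable (fun a => QS a i) μ := hQi.integrable one_le_two
      have hcond := condExp_mul_of_stronglyMeasurable_left (m := mS) (μ := μ) hSim
        (by exact hint) hQiint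
      have hcondQ : μ[fun a => QS a i|mS] =ᵐ[μ] fun a => S a i := by
        have h1 := aux_condexp_clm hmSle (EuclideanSpace.proj (𝕜 := ℝ) i) hQSint
        refine h1.trans ?_
        filter_upwards [hmean] with a ha
        simp [ha]
      calc ∫ a, S a i * QS a i ∂μ
          = ∫ a, ((fun a => S a i) * fun a => QS a i) a ∂μ := by simp [Pi.mul_apply]
        _ = ∫ a, (μ[(fun a => S a i) * fun a => QS a i|mS]) a ∂μ := (integral_condExp hmSle).symm
        _ = ∫ a, S a i * S a i ∂μ := by
            refine integral_congr_ae ?_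
            filter_upwards [hcond, hcondQ] with a h1 h2
            rw [h1]
            simp only [Pi.mul_apply]
            rw [h2]
    have hinner_eq : ∀ a, (inner ℝ (QS a) (S a) : ℝ) = ∑ i, S a i * QS a i := by
      intro a
      rw [PiLp.inner_apply]
      exact Finset.sum_congr rfl fun i _ => by
        simp [RCLike.inner_apply, conj_trivial, mul_comm]
    have hnorm_eq : ∀ a, ‖S a‖ ^ 2 = ∑ i, S a i * S a i := by
      intro a
      rw [← real_inner_self_eq_norm_sq, PiLp.inner_apply]
      exact Finset.sum_congr rfl fun i _ => by simp [RCLike.inner_apply, conj_trivial, sq]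
    have hintS : ∀ i : Fin q, Integrable (fun a => S a i * QS a i) μ := by
      intro i
      have hSi : MemLp (fun a => S a i) 2 μ := aux_coord_memLp hS i
      have hQi : MemLp (fun a => QS a i) 2 μ := aux_coord_memLp hQS i
      have := aux_integrable_inner (E := ℝ) hSi hQi
      simpa [RCLike.inner_apply, conj_trivial, mul_comm] using this
    have hintSS : ∀ i : Fin q, Integrable (fun a => S a i * S a i) μ := by
      intro i
      have hSi : MemLp (fun a => S a i) 2 μ := aux_coord_memLp hS i
      have := aux_integrable_inner (E := ℝ) hSi hSi
      simpa [RCLike.inner_apply, conj_trivial, sq] using this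
    calc ∫ a, (inner ℝ (QS a) (S a) : ℝ) ∂μ
        = ∫ a, ∑ i, S a i * QS a i ∂μ := by simp_rw [hinner_eq]
      _ = ∑ i, ∫ a, S a i * QS a i ∂μ := integral_finset_sum _ fun i _ => hintS i
      _ = ∑ i, ∫ a, S a i * S a i ∂μ := Finset.sum_congr rfl fun i _ => key i
      _ = ∫ a, ∑ i, S a i * S a i ∂μ := (integral_finset_sum _ fun i _ => hintSS i).symm
      _ = ∫ a, ‖S a‖ ^ 2 ∂μ := by simp_rw [hnorm_eq]
  -- final algebra
  have hIS : (0:ℝ) ≤ ∫ a, ‖S a‖ ^ 2 ∂μ := integral_nonneg fun a => sq_nonneg _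
  rw [hexp, hI1, hI2, hcross]
  have h1 : (1 / p) * ∫ a, ‖QS a‖ ^ 2 ∂μ ≤ (1 / p) * ((1 + ω) * ∫ a, ‖S a‖ ^ 2 ∂μ) :=
    mul_le_mul_of_nonneg_left hQQ (by positivity)
  have h2 : (1 / p) * ((1 + ω) * ∫ a, ‖S a‖ ^ 2 ∂μ) - ∫ a, ‖S a‖ ^ 2 ∂μ
      = ((1 - p) / p * (1 + ω) + ω) * ∫ a, ‖S a‖ ^ 2 ∂μ := by
    field_simp
    ring
  linarith
end

section
/- Suppose α ∈ (0, 1/(1+ω)] with ω ≥ 0 and let V' := (1−α) V + α S + α ξ where ξ has conditional mean 0 given (V,S) and conditional second moment E[‖ξ‖² | V,S] ≤ ω ‖Δ‖² with Δ := S − V. Then E[‖V' − s‖² | V, S] ≤ (1−α)‖V − s‖² + α ‖S − s‖² + α(α(1+ω) − 1)‖Δ‖² for every fixed s ∈ ℝ^q, and in particular E[‖V' − s‖² | V,S] ≤ (1−α)‖V − s‖² + α ‖S − s‖². -/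
open MeasureTheory
open scoped InnerProductSpace

/-!
Write `V' - s = W + α • ξ` with `W := (1 - α) • (V - s) + α • (S - s)`, which is measurable for
`σ(V, S)`. Pulling `W` out of the conditional expectation kills the cross term `⟪W, ξ⟫`, so
`E[‖V' - s‖² | V, S] = ‖W‖² + α² E[‖ξ‖² | V, S]`; polarization evaluates `‖W‖²` and the
variance bound on `ξ` finishes.
-/

section InnerProductSpace

variable {E : Type*} [NormedAddCommGroup E] [InnerProductSpace ℝ E]

theorem norm_one_sub_smul_add_smul_sq (α : ℝ) (x y : E) :
    ‖(1 - α) • x + α • y‖ ^ 2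
      = (1 - α) * ‖x‖ ^ 2 + α * ‖y‖ ^ 2 - α * (1 - α) * ‖y - x‖ ^ 2 := by
  rw [norm_add_sq_real, norm_sub_sq_real, norm_smul, norm_smul, mul_pow, mul_pow,
    Real.norm_eq_abs, Real.norm_eq_abs, sq_abs, sq_abs, real_inner_smul_left,
    real_inner_smul_right, real_inner_comm x y]
  ring

variable {Ω : Type*} {m m0 : MeasurableSpace Ω} {μ : Measure Ω}

theorem MeasureTheory.MemLp.integrable_inner {f g : Ω → E} (hf : MemLp f 2 μ)
    (hg : MemLp g 2 μ) :
    Integrable (fun a => ⟪f a, g a⟫_ℝ) μ :=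
  memLp_one_iff_integrable.mp ((innerSL ℝ).memLp_of_bilin 1 hf hg)

variable [CompleteSpace E]

theorem condExp_inner_eq_zero_of_condExp_eq_zero {W ξ : Ω → E} (hW : StronglyMeasurable[m] W)
    (hWξ : Integrable (fun a => ⟪W a, ξ a⟫_ℝ) μ) (hξ : Integrable ξ μ)
    (hmean : μ[ξ | m] =ᵐ[μ] 0) :
    μ[fun a => ⟪W a, ξ a⟫_ℝ | m] =ᵐ[μ] 0 := by
  filter_upwards [condExp_bilin_of_stronglyMeasurable_left (innerSL ℝ) hW hWξ hξ, hmean]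
    with a hpull hzero
  rw [hzero, Pi.zero_apply, map_zero] at hpull
  exact hpull

theorem condExp_norm_add_smul_sq [IsFiniteMeasure μ] (hm : m ≤ m0) {W ξ : Ω → E}
    (hW : StronglyMeasurable[m] W) (hWL2 : MemLp W 2 μ) (hξ : MemLp ξ 2 μ)
    (hmean : μ[ξ | m] =ᵐ[μ] 0) (c : ℝ) :
    μ[fun a => ‖W a + c • ξ a‖ ^ 2 | m]
      =ᵐ[μ] fun a => ‖W a‖ ^ 2 + c ^ 2 * μ[fun a => ‖ξ a‖ ^ 2 | m] a := by
  have hW2 : Integrable (fun a => ‖W a‖ ^ 2) μ :=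
    (memLp_two_iff_integrable_sq_norm hWL2.1).mp hWL2
  have hWξ : Integrable (fun a => ⟪W a, ξ a⟫_ℝ) μ := hWL2.integrable_inner hξ
  have hξ2 : Integrable (fun a => ‖ξ a‖ ^ 2) μ :=
    (memLp_two_iff_integrable_sq_norm hξ.1).mp hξ
  have hexpand : (fun a => ‖W a + c • ξ a‖ ^ 2)
      = (fun a => ‖W a‖ ^ 2) + (2 * c) • (fun a => ⟪W a, ξ a⟫_ℝ)
        + c ^ 2 • (fun a => ‖ξ a‖ ^ 2) := by
    funext a
    simp only [Pi.add_apply, Pi.smul_apply, smul_eq_mul]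
    rw [norm_add_sq_real, real_inner_smul_right, norm_smul, mul_pow, Real.norm_eq_abs, sq_abs]
    ring
  have hW2m : μ[fun a => ‖W a‖ ^ 2 | m] = fun a => ‖W a‖ ^ 2 :=
    condExp_of_stronglyMeasurable hm (hW.norm.pow 2) hW2
  rw [hexpand]
  filter_upwards [condExp_add (hW2.add (hWξ.smul (2 * c))) (hξ2.smul (c ^ 2)) m,
    condExp_add hW2 (hWξ.smul (2 * c)) m, condExp_smul (2 * c) (fun a => ⟪W a, ξ a⟫_ℝ) m,
    condExp_smul (c ^ 2) (fun a => ‖ξ a‖ ^ 2) m,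
    condExp_inner_eq_zero_of_condExp_eq_zero hW hWξ (hξ.integrable one_le_two) hmean]
    with a h1 h2 h3 h4 h5
  rw [h1, Pi.add_apply, h2, Pi.add_apply, h3, h4, hW2m, Pi.smul_apply, Pi.smul_apply, h5]
  simp only [Pi.zero_apply, smul_eq_mul, mul_zero, add_zero]

end InnerProductSpace

theorem memory_update_contraction_general (q : ℕ) (Ω : Type*)
    [m0 : MeasurableSpace Ω] (μ : Measure Ω) [IsProbabilityMeasure μ]
    (α ω : ℝ) (hα0 : 0 < α) (hα : α ≤ 1 / (1 + ω))
    (V S ξ : Ω → EuclideanSpace ℝ (Fin q))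
    (m : MeasurableSpace Ω)
    (hm : m = MeasurableSpace.comap (fun a => (V a, S a)) inferInstance)
    (hmle : m ≤ m0)
    (hV : MemLp V 2 μ) (hS : MemLp S 2 μ) (hξ : MemLp ξ 2 μ)
    (hmean : μ[ξ | m] =ᵐ[μ] 0)
    (hvar : ∀ᵐ a ∂μ, (μ[fun b => ‖ξ b‖ ^ 2 | m]) a ≤ ω * ‖S a - V a‖ ^ 2)
    (V' : Ω → EuclideanSpace ℝ (Fin q))
    (hV' : ∀ a, V' a = (1 - α) • V a + α • S a + α • ξ a) :
    ∀ s : EuclideanSpace ℝ (Fin q),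
      (∀ᵐ a ∂μ, (μ[fun b => ‖V' b - s‖ ^ 2 | m]) a
        ≤ (1 - α) * ‖V a - s‖ ^ 2 + α * ‖S a - s‖ ^ 2
          + α * (α * (1 + ω) - 1) * ‖S a - V a‖ ^ 2) ∧
      (∀ᵐ a ∂μ, (μ[fun b => ‖V' b - s‖ ^ 2 | m]) a
        ≤ (1 - α) * ‖V a - s‖ ^ 2 + α * ‖S a - s‖ ^ 2) := by
  intro s
  have hVS : Measurable[m] fun a => (V a, S a) := hm ▸ comap_measurable _
  set W := fun a => (1 - α) • (V a - s) + α • (S a - s) with hW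
  have hWm : StronglyMeasurable[m] W :=
    (((hVS.fst.sub_const s).const_smul (1 - α)).add
      ((hVS.snd.sub_const s).const_smul α)).stronglyMeasurable
  have hWL2 : MemLp W 2 μ :=
    ((hV.sub (memLp_const s)).const_smul (1 - α)).add ((hS.sub (memLp_const s)).const_smul α)
  have hsplit : (fun b => ‖V' b - s‖ ^ 2) = fun b => ‖W b + α • ξ b‖ ^ 2 := by
    funext b
    rw [hV' b, hW]
    congr 2
    module
  have hcond := condExp_norm_add_smul_sq hmle hWm hWL2 hξ hmean α
  rw [← hsplit] at hcond
  have hαω : α * (1 + ω) ≤ 1 :=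
    (le_div_iff₀ (one_div_pos.mp (hα0.trans_le hα))).mp hα
  have hfirst : ∀ᵐ a ∂μ, (μ[fun b => ‖V' b - s‖ ^ 2 | m]) a
      ≤ (1 - α) * ‖V a - s‖ ^ 2 + α * ‖S a - s‖ ^ 2
        + α * (α * (1 + ω) - 1) * ‖S a - V a‖ ^ 2 := by
    filter_upwards [hcond, hvar] with a hca hva
    rw [hca, hW, norm_one_sub_smul_add_smul_sq, sub_sub_sub_cancel_right]
    linarith [mul_le_mul_of_nonneg_left hva (sq_nonneg α)]
  refine ⟨hfirst, ?_⟩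
  filter_upwards [hfirst] with a ha
  have hgap : α * (α * (1 + ω) - 1) * ‖S a - V a‖ ^ 2 ≤ 0 :=
    mul_nonpos_of_nonpos_of_nonneg (mul_nonpos_of_nonneg_of_nonpos hα0.le (by linarith))
      (sq_nonneg _)
  linarith

theorem memory_update_contraction (q : ℕ) (Ω : Type*)
    [m0 : MeasurableSpace Ω] (μ : Measure Ω) [IsProbabilityMeasure μ]
    (α ω : ℝ) (hω : 0 ≤ ω) (hα0 : 0 < α) (hα : α ≤ 1 / (1 + ω))
    (V S ξ : Ω → EuclideanSpace ℝ (Fin q))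
    (m : MeasurableSpace Ω)
    (hm : m = MeasurableSpace.comap (fun a => (V a, S a)) inferInstance)
    (hmle : m ≤ m0)
    (hV : MemLp V 2 μ) (hS : MemLp S 2 μ) (hξ : MemLp ξ 2 μ)
    (hmean : μ[ξ | m] =ᵐ[μ] 0)
    (hvar : ∀ᵐ a ∂μ, (μ[fun b => ‖ξ b‖ ^ 2 | m]) a ≤ ω * ‖S a - V a‖ ^ 2)
    (V' : Ω → EuclideanSpace ℝ (Fin q))
    (hV' : ∀ a, V' a = (1 - α) • V a + α • S a + α • ξ a) :
    ∀ s : EuclideanSpace ℝ (Fin q),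
      (∀ᵐ a ∂μ, (μ[fun b => ‖V' b - s‖ ^ 2 | m]) a
        ≤ (1 - α) * ‖V a - s‖ ^ 2 + α * ‖S a - s‖ ^ 2
          + α * (α * (1 + ω) - 1) * ‖S a - V a‖ ^ 2) ∧
      (∀ᵐ a ∂μ, (μ[fun b => ‖V' b - s‖ ^ 2 | m]) a
        ≤ (1 - α) * ‖V a - s‖ ^ 2 + α * ‖S a - s‖ ^ 2) :=
  memory_update_contraction_general q Ω (m0 := m0) μ α ω hα0 hα V S ξ m hm hmle hV hS hξ hmean hvar
    V' hV'
end
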